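/- For the GLLOWJFA over {a,b,c} with states q0,q1,q2, start q0, accepting state q1, and rules (q1,c,q0),(q1,ab,q1),(q2,a,q0),(q2,b,q0), the accepted language is D·c, where D is the Dyck language over {a,b}. -/

import Mathlib

open List

/-- Two-letter alphabet. -/
inductive AB : Type | a | b
  deriving DecidableEq, Repr

/-- Three-letter alphabet. -/
inductive ABC : Type | a | b | c
  deriving DecidableEq, Repr

instance : Fintype AB := ⟨⟨{AB.a, AB.b}, by decide⟩, by intro x; cases x <;> decide⟩
instance : Fintype ABC := ⟨⟨{ABC.a, ABC.b, ABC.c}, by decide⟩, by intro x; cases x <;> decide⟩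

/-- The Dyck language over the two designated letters `a` (open) and `b` (close):
balanced words using only `a` and `b`. -/
def Dyck {α : Type} [DecidableEq α] (a b : α) : Set (List α) :=
  {w | (∀ x ∈ w, x = a ∨ x = b) ∧ w.count a = w.count b ∧
       ∀ u, u <+: w → u.count b ≤ u.count a}

/-- `u` contains no word from `S` as a subword (infix). -/
def NoSub {α : Type} (S : Set (List α)) (u : List α) : Prop :=
  ¬ ∃ w ∈ S, w <:+: u

/-! ### Right one-way jumping finite automata -/

structure ROWJFA (α σ : Type) where
  start : σ
  accept : Set σ
  rules : Set (σ × α × σ)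
  det : ∀ p a q q', (p, a, q) ∈ rules → (p, a, q') ∈ rules → q = q'

namespace ROWJFA
variable {α σ : Type}

def sig (A : ROWJFA α σ) (p : σ) : Set α := {a | ∃ q, (p, a, q) ∈ A.rules}

/-- `p x a y ↷ q y x` when `(p,a,q) ∈ R` and `x ∈ (Σ∖Σ_p)*`. -/
inductive Step (A : ROWJFA α σ) : σ × List α → σ × List α → Prop
  | jump {p q : σ} {a : α} (x y : List α) :
      (p, a, q) ∈ A.rules → (∀ b ∈ x, b ∉ A.sig p) →
      Step A (p, x ++ a :: y) (q, y ++ x)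

def language (A : ROWJFA α σ) : Set (List α) :=
  {w | ∃ qf ∈ A.accept, Relation.ReflTransGen (Step A) (A.start, w) (qf, [])}

end ROWJFA

def ROWJ {α : Type} (L : Set (List α)) : Prop :=
  ∃ (σ : Type) (_ : Finite σ) (A : ROWJFA α σ), A.language = L

/-! ### Left one-way jumping finite automata -/

structure LOWJFA (α σ : Type) where
  start : σ
  accept : Set σ
  /-- A rule `(q, a, p)` means: from state `p`, delete `a`, move to state `q`. -/
  rules : Set (σ × α × σ)
  det : ∀ p a q q', (q, a, p) ∈ rules → (q', a, p) ∈ rules → q = q'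

namespace LOWJFA
variable {α σ : Type}

def sig (A : LOWJFA α σ) (p : σ) : Set α := {a | ∃ q, (q, a, p) ∈ A.rules}

/-- `x y q ↶ y a x p` when `(q,a,p) ∈ R` and `x ∈ (Σ∖Σ_p)*`;
configurations are in `Σ* Q`. -/
inductive Step (A : LOWJFA α σ) : List α × σ → List α × σ → Prop
  | jump {p q : σ} {a : α} (x y : List α) :
      (q, a, p) ∈ A.rules → (∀ b ∈ x, b ∉ A.sig p) →
      Step A (y ++ a :: x, p) (x ++ y, q)

def language (A : LOWJFA α σ) : Set (List α) :=
  {w | ∃ qf ∈ A.accept, Relation.ReflTransGen (Step A) (w, A.start) ([], qf)}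

end LOWJFA

def LOWJ {α : Type} (L : Set (List α)) : Prop :=
  ∃ (σ : Type) (_ : Finite σ) (A : LOWJFA α σ), A.language = L

/-! ### Generalized right linear one-way jumping finite automata -/

structure GRLOWJFA (α σ : Type) where
  start : σ
  accept : Set σ
  rules : Set (σ × List α × σ)
  finite : rules.Finite
  ne : ∀ r ∈ rules, r.2.1 ≠ ([] : List α)
  det : ∀ p w q q', (p, w, q) ∈ rules → (p, w, q') ∈ rules → q = q'

namespace GRLOWJFA
variable {α σ : Type}

def sig (A : GRLOWJFA α σ) (p : σ) : Set (List α) := {w | ∃ q, (p, w, q) ∈ A.rules}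

/-- Configurations are triples `(t, p, v)` representing `t p v ∈ Σ* Q Σ*`. -/
inductive Step (A : GRLOWJFA α σ) :
    List α × σ × List α → List α × σ × List α → Prop
  /-- `t p u x v ↷ t u q v`. -/
  | rule {p q : σ} {x : List α} (t u v : List α) :
      (p, x, q) ∈ A.rules →
      NoSub (A.sig p) u →
      (¬ ∃ u₂ x₁ : List α, u₂ ≠ [] ∧ x₁ ≠ [] ∧ u₂ <:+ u ∧ x₁ <+: x ∧ u₂ ++ x₁ = x) →
      Step A (t, p, u ++ x ++ v) (t ++ u, q, v)
  /-- `x p y ↷ p x y`. -/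
  | ret {p : σ} (x y : List α) :
      x ≠ [] → NoSub (A.sig p) y →
      Step A (x, p, y) ([], p, x ++ y)

def language (A : GRLOWJFA α σ) : Set (List α) :=
  {w | ∃ qf ∈ A.accept, Relation.ReflTransGen (Step A) ([], A.start, w) ([], qf, [])}

end GRLOWJFA

def GRLOWJ {α : Type} (L : Set (List α)) : Prop :=
  ∃ (σ : Type) (_ : Finite σ) (A : GRLOWJFA α σ), A.language = L

/-! ### Generalized left linear one-way jumping finite automata -/

structure GLLOWJFA (α σ : Type) where
  start : σ
  accept : Set σ
  /-- A rule `(q, w, p)` means: from state `p`, delete `w`, move to state `q`. -/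
  rules : Set (σ × List α × σ)
  finite : rules.Finite
  ne : ∀ r ∈ rules, r.2.1 ≠ ([] : List α)
  det : ∀ p w q q', (q, w, p) ∈ rules → (q', w, p) ∈ rules → q = q'

namespace GLLOWJFA
variable {α σ : Type}

def sig (A : GLLOWJFA α σ) (p : σ) : Set (List α) := {w | ∃ q, (q, w, p) ∈ A.rules}

/-- Configurations are triples `(v, p, t)` representing `v p t ∈ Σ* Q Σ*`. -/
inductive Step (A : GLLOWJFA α σ) :
    List α × σ × List α → List α × σ × List α → Prop
  /-- `v q u t ↶ v x u p t`. -/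
  | rule {p q : σ} {x : List α} (t u v : List α) :
      (q, x, p) ∈ A.rules →
      NoSub (A.sig p) u →
      (¬ ∃ x₂ u₁ : List α, x₂ ≠ [] ∧ u₁ ≠ [] ∧ x₂ <:+ x ∧ u₁ <+: u ∧ x₂ ++ u₁ = x) →
      Step A (v ++ x ++ u, p, t) (v, q, u ++ t)
  /-- `y x p ↶ y p x`. -/
  | ret {p : σ} (x y : List α) :
      x ≠ [] → NoSub (A.sig p) y →
      Step A (y, p, x) (y ++ x, p, [])

def language (A : GLLOWJFA α σ) : Set (List α) :=
  {w | ∃ qf ∈ A.accept, Relation.ReflTransGen (Step A) (w, A.start, []) ([], qf, [])}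

end GLLOWJFA

def GLLOWJ {α : Type} (L : Set (List α)) : Prop :=
  ∃ (σ : Type) (_ : Finite σ) (A : GLLOWJFA α σ), A.language = L

inductive St10 : Type | q0 | q1 | q2
  deriving DecidableEq

/-- The GLLOWJFA of STATEMENT 10 (a rule `(q, w, p)` deletes `w` moving from `p` to `q`). -/
def A10 : GLLOWJFA ABC St10 where
  start := St10.q0
  accept := {St10.q1}
  rules := {(St10.q1, [ABC.c], St10.q0), (St10.q1, [ABC.a, ABC.b], St10.q1),
            (St10.q2, [ABC.a], St10.q0), (St10.q2, [ABC.b], St10.q0)}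
  finite := (((Set.finite_singleton _).insert _).insert _).insert _
  ne := by
    intro r hr
    simp only [Set.mem_insert_iff, Set.mem_singleton_iff] at hr
    rcases hr with rfl|rfl|rfl|rfl <;> simp
  det := by
    intro p w q q' h h'
    simp only [Set.mem_insert_iff, Set.mem_singleton_iff] at h h'
    rcases h with h|h|h|h <;> rcases h' with h'|h'|h'|h' <;> simp_all


/-!
In state `q0` every letter belongs to `Σ_q0`, so the only moves are deleting the last letter:
a final `c` leads to `q1`, a final `a` or `b` to the dead state `q2`. In `q1` the only rule
deletes `ab`, and deleting or inserting `ab` preserves membership in the Dyck language, so a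
configuration `y q1 t` leads to acceptance iff `yt ∈ D`. For the forward run, delete the
rightmost `ab` of `y` (what follows it contains no `ab`, as the rule requires); when `y` has no
`ab`, jump `t` back to the left, and use that every nonempty Dyck word contains `ab`.
-/

namespace List

variable {α : Type}

theorem prefix_append_or {p v w : List α} (h : p <+: v ++ w) :
    p <+: v ∨ ∃ q, q <+: w ∧ p = v ++ q := by
  obtain ⟨s, hs⟩ := h
  rcases append_eq_append_iff.mp hs with ⟨r, rfl, -⟩ | ⟨q, rfl, rfl⟩
  · exact .inl (prefix_append _ _)
  · exact .inr ⟨q, prefix_append _ _, rfl⟩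

theorem exists_eq_append_append_not_infix {s : List α} (hs : s ≠ []) :
    ∀ {l : List α}, s <:+: l → ∃ v u, l = v ++ s ++ u ∧ ¬ s <:+: u
  | [], h => absurd (eq_nil_of_infix_nil h) hs
  | x :: l, h => by
    by_cases hl : s <:+: l
    · obtain ⟨v, u, rfl, hu⟩ := exists_eq_append_append_not_infix hs hl
      exact ⟨x :: v, u, rfl, hu⟩
    · obtain ⟨u, hsu⟩ := (infix_cons_iff.mp h).resolve_right hl
      obtain ⟨y, s', rfl⟩ := exists_cons_of_ne_nil hs
      obtain ⟨rfl, rfl⟩ := cons_eq_cons.mp hsu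
      exact ⟨[], u, by simp, fun hu => hl (hu.trans (suffix_append s' u).isInfix)⟩

theorem pair_infix_cons_of_mem {a b : α} (hab : a ≠ b) {r : List α}
    (hletters : ∀ x ∈ r, x = a ∨ x = b) (hb : b ∈ r) : [a, b] <:+: a :: r := by
  induction r with
  | nil => simp at hb
  | cons y r ih =>
    rcases hletters y (by simp) with rfl | rfl
    · have hr : b ∈ r := (mem_cons.mp hb).resolve_left hab.symm
      exact (ih (fun x hx => hletters x (by simp [hx])) hr).trans (suffix_cons y _).isInfix
    · exact (prefix_append [a, y] r).isInfix

end List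

section Dyck

variable {α : Type} [DecidableEq α] {a b : α}

theorem nil_mem_dyck : ([] : List α) ∈ Dyck a b :=
  ⟨by simp, rfl, fun u hu => by simp [List.prefix_nil.mp hu]⟩

theorem append_pair_append_mem_dyck_iff (hab : a ≠ b) {v u : List α} :
    v ++ [a, b] ++ u ∈ Dyck a b ↔ v ++ u ∈ Dyck a b := by
  have count_a : ∀ q : List α, (v ++ [a, b] ++ q).count a = (v ++ q).count a + 1 := by
    simp [List.count_append, hab.symm]; omega
  have count_b : ∀ q : List α, (v ++ [a, b] ++ q).count b = (v ++ q).count b + 1 := by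
    simp [List.count_append, hab]; omega
  constructor
  · rintro ⟨hletters, hcount, hprefix⟩
    refine ⟨fun x hx => hletters x (by simp only [List.mem_append, List.mem_cons] at hx ⊢; tauto), ?_, fun p hp => ?_⟩
    · rw [count_a, count_b] at hcount; omega
    rcases List.prefix_append_or hp with hp | ⟨q, hq, rfl⟩
    · exact hprefix p ((hp.trans (List.prefix_append v [a, b])).trans (List.prefix_append _ u))
    · have := hprefix (v ++ [a, b] ++ q) (by simpa using hq)
      rw [count_a, count_b] at this; omega
  · rintro ⟨hletters, hcount, hprefix⟩
    refine ⟨fun x hx => ?_, by rw [count_a, count_b]; omega, fun p hp => ?_⟩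
    · simp only [List.mem_append, List.mem_cons, List.not_mem_nil, or_false] at hx
      rcases hx with (hx | hx | hx) | hx
      · exact hletters x (by simp [hx])
      · exact .inl hx
      · exact .inr hx
      · exact hletters x (by simp [hx])
    rw [List.append_assoc] at hp
    rcases List.prefix_append_or hp with hp | ⟨q, hq, rfl⟩
    · exact hprefix p (hp.trans (List.prefix_append v u))
    rcases List.prefix_append_or hq with hq | ⟨q, hq, rfl⟩
    · have hv := hprefix v (List.prefix_append v u)
      rcases List.prefix_cons_iff.mp hq with rfl | ⟨q₁, rfl, hq₁⟩
      · simpa using hv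
      rcases List.prefix_cons_iff.mp hq₁ with rfl | ⟨q₂, rfl, hq₂⟩
      · simp [List.count_append, hab]; omega
      · simp [List.prefix_nil.mp hq₂, List.count_append, hab, hab.symm]; omega
    · have := hprefix (v ++ q) (by simpa using hq)
      rw [← List.append_assoc, count_a, count_b]
      omega

theorem pair_infix_of_mem_dyck (hab : a ≠ b) {w : List α} (hw : w ∈ Dyck a b) (hne : w ≠ []) :
    [a, b] <:+: w := by
  obtain ⟨hletters, hcount, hprefix⟩ := hw
  obtain ⟨x, r, rfl⟩ := List.exists_cons_of_ne_nil hne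
  have hx : x = a := by
    refine (hletters x (by simp)).resolve_right fun hxb => ?_
    have := hprefix [x] (List.singleton_prefix_cons_iff.mpr rfl)
    simp [hxb, hab.symm] at this
  subst x
  have hb : b ∈ r := by
    have : 0 < (a :: r).count b := hcount ▸ List.count_pos_iff.mpr (by simp)
    exact (List.mem_cons.mp (List.count_pos_iff.mp this)).resolve_left hab.symm
  exact List.pair_infix_cons_of_mem hab (fun y hy => hletters y (by simp [hy])) hb

end Dyck

theorem no_overlap_of_nil {α : Type} (x : List α) :
    ¬ ∃ x₂ u₁ : List α, x₂ ≠ [] ∧ u₁ ≠ [] ∧ x₂ <:+ x ∧ u₁ <+: [] ∧ x₂ ++ u₁ = x :=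
  fun ⟨_, _, _, hu₁, _, hpre, _⟩ => hu₁ (List.prefix_nil.mp hpre)

theorem no_overlap_pair {α : Type} {a b : α} (hab : a ≠ b) (u : List α) :
    ¬ ∃ x₂ u₁ : List α, x₂ ≠ [] ∧ u₁ ≠ [] ∧ x₂ <:+ [a, b] ∧ u₁ <+: u ∧ x₂ ++ u₁ = [a, b] := by
  rintro ⟨x₂, u₁, hx₂, hu₁, hsuf, -, heq⟩
  obtain ⟨y, x₂, rfl⟩ := List.exists_cons_of_ne_nil hx₂
  obtain ⟨z, u₁, rfl⟩ := List.exists_cons_of_ne_nil hu₁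
  simp only [List.cons_append, List.cons.injEq, List.append_eq_cons_iff, List.nil_eq,
    List.append_eq_nil_iff, reduceCtorEq, and_false, exists_const, or_false] at heq
  obtain ⟨rfl, rfl, rfl, rfl⟩ := heq
  simp [List.suffix_cons_iff, hab] at hsuf

namespace A10

open ABC St10 GLLOWJFA

theorem mem_rules {q : St10} {w : List ABC} {p : St10} : (q, w, p) ∈ A10.rules ↔
    (q = q1 ∧ w = [c] ∧ p = q0) ∨ (q = q1 ∧ w = [a, b] ∧ p = q1) ∨
    (q = q2 ∧ w = [a] ∧ p = q0) ∨ (q = q2 ∧ w = [b] ∧ p = q0) := by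
  simp [A10, Prod.ext_iff]

theorem noSub_sig_q0_iff {u : List ABC} : NoSub (A10.sig q0) u ↔ u = [] := by
  cases u with
  | nil => simp [NoSub, GLLOWJFA.sig, mem_rules]
  | cons x r =>
    simp only [NoSub, reduceCtorEq, iff_false, not_not]
    refine ⟨[x], ?_, (List.prefix_append [x] r).isInfix⟩
    cases x <;> simp [GLLOWJFA.sig, mem_rules]

theorem noSub_sig_q1_iff {u : List ABC} : NoSub (A10.sig q1) u ↔ ¬ [a, b] <:+: u := by
  simp [NoSub, GLLOWJFA.sig, mem_rules]

theorem step_of_last_c (v : List ABC) : Step A10 (v ++ [c], q0, []) (v, q1, []) := by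
  simpa using Step.rule (A := A10) [] [] v (mem_rules.mpr (.inl ⟨rfl, rfl, rfl⟩))
    (noSub_sig_q0_iff.mpr rfl) (no_overlap_of_nil [c])

theorem step_of_pair_infix {y : List ABC} (t : List ABC) (h : [a, b] <:+: y) :
    ∃ v u, y = v ++ [a, b] ++ u ∧ Step A10 (y, q1, t) (v, q1, u ++ t) := by
  obtain ⟨v, u, rfl, hu⟩ := List.exists_eq_append_append_not_infix (by simp) h
  exact ⟨v, u, rfl, Step.rule t u v (mem_rules.mpr (.inr (.inl ⟨rfl, rfl, rfl⟩)))
    (noSub_sig_q1_iff.mpr hu) (no_overlap_pair (by decide) u)⟩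

theorem reaches_of_mem_dyck {y t : List ABC} (h : y ++ t ∈ Dyck a b) :
    Relation.ReflTransGen (Step A10) (y, q1, t) ([], q1, []) := by
  induction hn : (y ++ t).length using Nat.strong_induction_on generalizing y t with | _ n ih
  have of_pair_infix : ∀ {y' t'}, y' ++ t' = y ++ t → [a, b] <:+: y' →
      Relation.ReflTransGen (Step A10) (y', q1, t') ([], q1, []) := by
    intro y' t' hyt hy'
    obtain ⟨v, u, rfl, hstep⟩ := step_of_pair_infix t' hy'
    have hv : v ++ (u ++ t') ∈ Dyck a b :=
      (append_pair_append_mem_dyck_iff (by decide)).mp (by rw [← hyt] at h; simpa using h)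
    refine .head hstep (ih _ ?_ hv rfl)
    rw [← hn, ← hyt]
    simp only [List.length_append, List.length_cons, List.length_nil]
    omega
  by_cases hy : [a, b] <:+: y
  · exact of_pair_infix rfl hy
  by_cases ht : t = []
  · subst ht
    have : y = [] := by
      by_contra hne
      exact hy (pair_infix_of_mem_dyck (by decide) (by simpa using h) hne)
    subst this
    exact .refl
  have hret : Step A10 (y, q1, t) (y ++ t, q1, []) := Step.ret t y ht (noSub_sig_q1_iff.mpr hy)
  have hne : y ++ t ≠ [] := by simp [ht]
  exact .head hret (of_pair_infix (by simp) (pair_infix_of_mem_dyck (by decide) h hne))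

/-- Holds at every configuration from which `([], q1, [])` is reachable. -/
def Good : List ABC × St10 × List ABC → Prop
  | (y, q0, t) => t = [] → ∃ v ∈ Dyck a b, y = v ++ [c]
  | (y, q1, t) => y ++ t ∈ Dyck a b
  | (_, q2, _) => False

theorem good_of_step {cfg cfg' : List ABC × St10 × List ABC} (hstep : Step A10 cfg cfg')
    (h : Good cfg') : Good cfg := by
  cases hstep with
  | rule t u v hr hu _ =>
    rcases mem_rules.mp hr with ⟨rfl, rfl, rfl⟩ | ⟨rfl, rfl, rfl⟩ | ⟨rfl, rfl, rfl⟩ | ⟨rfl, rfl, rfl⟩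
    · obtain rfl := noSub_sig_q0_iff.mp hu
      rintro rfl
      exact ⟨v, by simpa [Good] using h, List.append_nil _⟩
    · show v ++ [a, b] ++ u ++ t ∈ Dyck a b
      rw [List.append_assoc _ u]
      exact (append_pair_append_mem_dyck_iff (by decide)).mpr h
    · exact h.elim
    · exact h.elim
  | @ret p x y hx _ =>
    cases p
    · exact fun hx' => absurd hx' hx
    · simpa [Good] using h
    · exact h.elim

theorem good_of_reaches_accept {cfg : List ABC × St10 × List ABC}
    (h : Relation.ReflTransGen (Step A10) cfg ([], q1, [])) : Good cfg :=
  h.head_induction_on nil_mem_dyck fun hstep _ ih => good_of_step hstep ih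

end A10

theorem stmt_10 :
    A10.language = {w : List ABC | ∃ v ∈ Dyck ABC.a ABC.b, w = v ++ [ABC.c]} := by
  ext w
  constructor
  · rintro ⟨qf, hqf, hreach⟩
    obtain rfl : qf = St10.q1 := hqf
    exact A10.good_of_reaches_accept hreach rfl
  · rintro ⟨v, hv, rfl⟩
    exact ⟨St10.q1, rfl,
      .head (A10.step_of_last_c v) (A10.reaches_of_mem_dyck (by simpa using hv))⟩
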